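/- arXiv:2010.08044 — 7 statements merged into one kernel-verified Lean document; each statement's English description precedes it below -/
import Mathlib

section
/- Let f(n)=n! and I_n=(f(n-1),f(n)]∩ℕ. If (n_k) is a strictly increasing sequence of natural numbers with n_{k+1} > n_k + 3 for all sufficiently large k and n_k > k, and Δ = ⋃_k I_{n_k}, then the lower asymptotic density of Δ equals 0. -/
open Filter Topology

/-- Lower asymptotic density: liminf of |S ∩ {1,...,n}|/n. -/
noncomputable def lowerDensity (S : Set ℕ) : ℝ :=
  Filter.liminf (fun n : ℕ => (Nat.card (↥(S ∩ Set.Icc 1 n)) : ℝ) / (n : ℝ)) Filter.atTop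

/-- The blocks of the factorial partition, as sets: I_1 = {1},
I_n = (f(n-1), f(n)] ∩ ℕ for n ≥ 2, where f(n)=n!. -/
def factBlockSet (n : ℕ) : Set ℕ :=
  if n = 1 then {1} else Set.Ioc (Nat.factorial (n - 1)) (Nat.factorial n)

/-- if (n_k) is strictly increasing with n_{k+1} > n_k + 3 for all
sufficiently large k and n_k > k for all k, and Δ = ⋃_k I_{n_k}, then the lower
asymptotic density of Δ is 0. -/
theorem stmt_4 (n : ℕ → ℕ) (hn : StrictMono n)
    (hgap : ∀ᶠ k in atTop, n (k + 1) > n k + 3) (hbig : ∀ k, n k > k) :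
    lowerDensity (⋃ k, factBlockSet (n k)) = 0 := by
  obtain ⟨K, hK⟩ := eventually_atTop.mp hgap
  set Δ : Set ℕ := ⋃ k, factBlockSet (n k) with hΔ
  set g : ℕ → ℝ := fun m => (Nat.card (↥(Δ ∩ Set.Icc 1 m)) : ℝ) / m with hg
  have hg0 : ∀ m, 0 ≤ g m := fun m => by positivity
  -- key pointwise bound along the subsequence m ↦ (n k + 1)!
  have key : ∀ k ≥ K, g ((n k + 1).factorial) ≤ 1 / (k + 1 : ℝ) := by
    intro k hk
    have hsub : Δ ∩ Set.Icc 1 ((n k + 1).factorial) ⊆ Set.Icc 1 ((n k).factorial) := by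
      rintro x ⟨hxΔ, hx1, hx2⟩
      obtain ⟨_, ⟨j, rfl⟩, hxj⟩ := hxΔ
      simp only [factBlockSet] at hxj
      rcases le_or_gt j k with hjk | hjk
      · have hnj : n j ≤ n k := hn.monotone hjk
        split_ifs at hxj with h1
        · rcases hxj with rfl
          exact ⟨le_refl 1, Nat.one_le_iff_ne_zero.mpr (Nat.factorial_ne_zero _)⟩
        · exact ⟨hx1, le_trans hxj.2 (Nat.factorial_le hnj)⟩
      · exfalso
        have h1 : n k + 3 < n (k + 1) := hK k hk
        have h2 : n (k + 1) ≤ n j := hn.monotone hjk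
        have hnj3 : n k + 3 < n j := lt_of_lt_of_le h1 h2
        have hne : n j ≠ 1 := by omega
        rw [if_neg hne] at hxj
        have h3 : (n k + 1).factorial ≤ (n j - 1).factorial :=
          Nat.factorial_le (by omega)
        have : (n k + 1).factorial < x := lt_of_le_of_lt h3 hxj.1
        omega
    have hcard : Nat.card (↥(Δ ∩ Set.Icc 1 ((n k + 1).factorial))) ≤ (n k).factorial := by
      have := Nat.card_mono (Set.finite_Icc 1 ((n k).factorial)) hsub
      simpa using this
    have hfacpos : (0:ℝ) < ((n k + 1).factorial : ℝ) := by
      exact_mod_cast (n k + 1).factorial_pos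
    have step1 : g ((n k + 1).factorial) ≤ ((n k).factorial : ℝ) / ((n k + 1).factorial : ℝ) := by
      simp only [hg]
      gcongr

    have step2 : ((n k).factorial : ℝ) / ((n k + 1).factorial : ℝ) = 1 / (n k + 1 : ℝ) := by
      have hne : ((n k).factorial : ℝ) ≠ 0 := by
        exact_mod_cast (n k).factorial_ne_zero
      rw [Nat.factorial_succ]
      push_cast
      rw [mul_comm, ← div_div, div_self hne]
    have step3 : (1 : ℝ) / (n k + 1 : ℝ) ≤ 1 / (k + 1 : ℝ) := by
      apply one_div_le_one_div_of_le (by positivity)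
      have := hbig k
      exact_mod_cast Nat.succ_le_succ (le_of_lt this)
    calc g ((n k + 1).factorial) ≤ _ := step1
      _ = _ := step2
      _ ≤ _ := step3
  -- tendsto of the subsequence indices
  have hm : Tendsto (fun k => (n k + 1).factorial) atTop atTop := by
    apply tendsto_atTop_mono (fun k => ?_) tendsto_id
    calc k ≤ n k := le_of_lt (hbig k)
      _ ≤ n k + 1 := Nat.le_succ _
      _ ≤ (n k + 1).factorial := Nat.self_le_factorial _
  have hbdd : IsBoundedUnder (· ≥ ·) atTop g := isBoundedUnder_of ⟨0, hg0⟩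
  have hbddabove : IsBoundedUnder (· ≤ ·) atTop g := by
    refine isBoundedUnder_of ⟨1, fun m => ?_⟩
    rcases Nat.eq_zero_or_pos m with rfl | hm1
    · simp [hg]
    · simp only [hg]
      rw [div_le_one (by exact_mod_cast hm1)]
      have h1 : Nat.card (↥(Δ ∩ Set.Icc 1 m)) ≤ Nat.card (Set.Icc 1 m : Set ℕ) :=
        Nat.card_mono (Set.finite_Icc 1 m) Set.inter_subset_right
      have h2 : Nat.card (Set.Icc 1 m : Set ℕ) = m := by simp
      exact_mod_cast h2 ▸ h1
  apply le_antisymm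
  · -- liminf ≤ 0
    apply le_of_forall_pos_le_add
    intro ε hε
    rw [zero_add]
    apply liminf_le_of_frequently_le _ hbdd
    rw [frequently_atTop]
    intro N
    obtain ⟨M, hM⟩ := exists_nat_gt (1 / ε)
    obtain ⟨k, hk1, hk2⟩ : ∃ k, k ≥ K ∧ ((n k + 1).factorial ≥ N ∧ k ≥ M) := by
      obtain ⟨k, hk⟩ := eventually_atTop.mp ((hm.eventually_ge_atTop N).and
        (eventually_ge_atTop M))
      exact ⟨max k K, le_max_right _ _, hk _ (le_max_left _ _)⟩
    refine ⟨(n k + 1).factorial, hk2.1, le_trans (key k hk1) ?_⟩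
    rw [div_le_iff₀ (by positivity)]
    rw [div_lt_iff₀ hε] at hM
    have hMk : (M:ℝ) ≤ (k:ℝ) := by exact_mod_cast hk2.2
    nlinarith
  · -- 0 ≤ liminf
    exact le_liminf_of_le hbddabove.isCoboundedUnder_ge
      (Eventually.of_forall hg0)
end

section
/- There does not exist a function W: {0,1}^ℕ → ℝ such that (i) W(x) > W(y) whenever x ≥ y pointwise and {i : x_i > y_i} has upper asymptotic density 1, and (ii) W(x) = W(y) whenever y is obtained from x by transposing two coordinates. -/
open Filter Topology

noncomputable def upperDensity (S : Set ℕ) : ℝ :=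
  Filter.limsup (fun n : ℕ => (Nat.card (↥(S ∩ Set.Icc 1 n)) : ℝ) / (n : ℝ)) Filter.atTop

/-!
Enumerate the rationals as `q k` and attach to `k` the block `(k!, (k+1)!]`: any infinite union
of blocks, even with finitely many points removed, has upper density one. For real `t` let `A t`
be the union of the blocks with `q k < t`, and `B t` the union of `A t` with infinitely many
blocks whose `q k` decrease to `t`. Pareto gives `W (A t) < W (B t)`. For `t < s`, `B t \ A s`
is finite while `A s \ B t` contains infinitely many blocks, so after finitely many
transpositions `B t` lies inside `A s` and Pareto gives `W (B t) < W (A s)`. The intervals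
`(W (A t), W (B t))`, `t ∈ ℝ`, would then be uncountably many disjoint open intervals.
-/

lemma card_inter_Icc_le (S : Set ℕ) (n : ℕ) : Nat.card ↥(S ∩ Set.Icc 1 n) ≤ n := by
  rw [Nat.card_coe_set_eq]
  calc (S ∩ Set.Icc 1 n).ncard ≤ (Set.Icc 1 n).ncard :=
        Set.ncard_le_ncard Set.inter_subset_right (Set.finite_Icc 1 n)
    _ = n := by rw [← Finset.coe_Icc, Set.ncard_coe_finset, Nat.card_Icc]; omega

lemma le_card_inter_Icc {S F : Set ℕ} {a n : ℕ} (hF : F.Finite) (h : Set.Ioc a n \ F ⊆ S) :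
    n ≤ Nat.card ↥(S ∩ Set.Icc 1 n) + a + F.ncard := by
  have hsub : Set.Ioc a n \ F ⊆ S ∩ Set.Icc 1 n :=
    fun i hi => ⟨h hi, Nat.one_le_of_lt hi.1.1, hi.1.2⟩
  have hIoc : (Set.Ioc a n).ncard - F.ncard ≤ (Set.Ioc a n \ F).ncard := Set.le_ncard_sdiff _ _ hF
  have hcard : (Set.Ioc a n).ncard = n - a := by
    rw [← Finset.coe_Ioc, Set.ncard_coe_finset, Nat.card_Ioc]
  have hS : (Set.Ioc a n \ F).ncard ≤ (S ∩ Set.Icc 1 n).ncard :=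
    Set.ncard_le_ncard hsub ((Set.finite_Icc 1 n).inter_of_right S)
  rw [Nat.card_coe_set_eq]
  omega

lemma upperDensity_eq_one_of_frequently {S : Set ℕ}
    (h : ∀ ε : ℝ, 0 < ε → ∃ᶠ n in atTop, 1 - ε ≤ (Nat.card ↥(S ∩ Set.Icc 1 n) : ℝ) / n) :
    upperDensity S = 1 := by
  have hle : ∀ n : ℕ, (Nat.card ↥(S ∩ Set.Icc 1 n) : ℝ) / n ≤ 1 := fun n =>
    div_le_one_of_le₀ (by exact_mod_cast card_inter_Icc_le S n) n.cast_nonneg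
  refine le_antisymm (limsup_le_of_le (isCoboundedUnder_le_of_le atTop fun n => by positivity)
    (Eventually.of_forall hle)) (le_of_forall_sub_le fun ε hε => ?_)
  exact le_limsup_of_frequently_le (h ε hε)
    (isBoundedUnder_of_eventually_le (Eventually.of_forall hle))

def block (k : ℕ) : Set ℕ := Set.Ioc k.factorial (k + 1).factorial

def blockUnion (K : Set ℕ) : Set ℕ := ⋃ k ∈ K, block k

lemma pairwise_disjoint_block : Pairwise (Function.onFun Disjoint block) :=
  Nat.monotone_factorial.pairwise_disjoint_on_Ioc_succ

lemma blockUnion_sdiff (K L : Set ℕ) : blockUnion K \ blockUnion L = blockUnion (K \ L) :=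
  Set.biUnion_sdiff_biUnion_eq (pairwise_disjoint_block.set_pairwise _)

lemma blockUnion_finite {K : Set ℕ} (hK : K.Finite) : (blockUnion K).Finite :=
  hK.biUnion fun _ _ => Set.finite_Ioc _ _

lemma factorial_succ_mem_block {k : ℕ} (hk : 0 < k) : (k + 1).factorial ∈ block k :=
  ⟨Nat.factorial_lt_of_lt hk k.lt_succ_self, le_rfl⟩

lemma blockUnion_infinite {K : Set ℕ} (hK : K.Infinite) : (blockUnion K).Infinite := by
  refine Set.infinite_of_forall_exists_gt fun N => ?_
  obtain ⟨k, hk, hNk⟩ := hK.exists_gt N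
  exact ⟨(k + 1).factorial, Set.mem_biUnion hk (factorial_succ_mem_block (N.zero_le.trans_lt hNk)),
    hNk.trans_le ((Nat.le_succ k).trans (Nat.self_le_factorial _))⟩

lemma upperDensity_eq_one_of_blockUnion_sdiff_subset {K F S : Set ℕ} (hK : K.Infinite)
    (hF : F.Finite) (h : blockUnion K \ F ⊆ S) : upperDensity S = 1 := by
  refine upperDensity_eq_one_of_frequently fun ε hε => frequently_atTop.2 fun N => ?_
  obtain ⟨k, hk, hk_gt⟩ := hK.exists_gt (max N ⌈(1 + F.ncard) / ε⌉₊)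
  have hkN : N ≤ (k + 1).factorial :=
    ((le_max_left _ _).trans_lt hk_gt).le.trans ((Nat.le_succ k).trans (Nat.self_le_factorial _))
  refine ⟨(k + 1).factorial, hkN, ?_⟩
  have hcount : (k + 1).factorial ≤ Nat.card ↥(S ∩ Set.Icc 1 (k + 1).factorial) +
      k.factorial + F.ncard :=
    le_card_inter_Icc hF fun i hi => h ⟨Set.mem_biUnion hk hi.1, hi.2⟩
  have hεk : 1 + (F.ncard : ℝ) ≤ ε * k := by
    have := Nat.ceil_le.1 ((le_max_right _ _).trans hk_gt.le)
    rwa [div_le_iff₀ hε, mul_comm] at this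
  have hfact : (1 : ℝ) ≤ k.factorial := by exact_mod_cast k.factorial_pos
  set m := Nat.card ↥(S ∩ Set.Icc 1 (k + 1).factorial)
  rw [Nat.factorial_succ] at hcount ⊢
  rw [le_div_iff₀ (by positivity)]
  have hcountR : ((k : ℝ) + 1) * k.factorial ≤ m + k.factorial + F.ncard := by exact_mod_cast hcount
  push_cast
  nlinarith [mul_le_mul_of_nonneg_right hεk (by positivity : (0 : ℝ) ≤ k.factorial),
    mul_le_mul_of_nonneg_left hfact (F.ncard.cast_nonneg : (0 : ℝ) ≤ F.ncard)]

def WeakUpperAsymptoticPareto (W : (ℕ → Fin 2) → ℝ) : Prop :=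
  ∀ x y : ℕ → Fin 2, (∀ i, y i ≤ x i) → upperDensity {i | y i < x i} = 1 → W y < W x

def Anonymous (W : (ℕ → Fin 2) → ℝ) : Prop :=
  ∀ (x : ℕ → Fin 2) (i j : ℕ), W (x ∘ Equiv.swap i j) = W x

section SocialWelfare

variable {W : (ℕ → Fin 2) → ℝ}

lemma WeakUpperAsymptoticPareto.lt_of_subset (hW : WeakUpperAsymptoticPareto W) {S T : Set ℕ}
    (hST : S ⊆ T) (hd : upperDensity (T \ S) = 1) :
    W (S.indicator 1) < W (T.indicator 1) := by
  have hlt : {i | S.indicator (1 : ℕ → Fin 2) i < T.indicator 1 i} = T \ S := by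
    ext i
    by_cases hS : i ∈ S <;> by_cases hT : i ∈ T <;> simp [hS, hT]
  refine hW _ _ (fun i => ?_) (hlt ▸ hd)
  by_cases hS : i ∈ S
  · simp [hS, hST hS]
  · simp [hS]

lemma Anonymous.apply_indicator_preimage_swap (hW : Anonymous W) (S : Set ℕ) (a b : ℕ) :
    W ((Equiv.swap a b ⁻¹' S).indicator 1) = W (S.indicator 1) :=
  hW (S.indicator 1) a b

/-- Finitely many transpositions move the points of `S \ T`, one at a time, into `T \ S`. -/
lemma Anonymous.exists_subset_of_sdiff_subset (hW : Anonymous W) {S T : Set ℕ} (E : Finset ℕ)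
    (hST : S \ T ⊆ E) (hTS : (T \ S).Infinite) :
    ∃ S' P : Set ℕ, W (S'.indicator 1) = W (S.indicator 1) ∧ P.Finite ∧ S' ⊆ T ∧
      T \ (S ∪ P) ⊆ T \ S' := by
  induction E using Finset.induction_on generalizing S with
  | empty =>
    exact ⟨S, ∅, rfl, Set.finite_empty, Set.sdiff_eq_empty.1 (by simpa using hST), by simp⟩
  | insert a E _ ih =>
    by_cases ha : a ∈ S \ T
    swap
    · exact ih (fun i hi => (Finset.mem_insert.1 (hST hi)).resolve_left fun hia => ha (hia ▸ hi))
        hTS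
    obtain ⟨g, hgT, hgS⟩ := hTS.nonempty
    have hmem : ∀ i, i ≠ a → i ≠ g → (i ∈ Equiv.swap a g ⁻¹' S ↔ i ∈ S) := fun i hia hig => by
      rw [Set.mem_preimage, Equiv.swap_apply_of_ne_of_ne hia hig]
    have hsub : T \ (S ∪ {g}) ⊆ T \ Equiv.swap a g ⁻¹' S := fun i ⟨hiT, hi⟩ => by
      simp only [Set.mem_union, Set.mem_singleton_iff, not_or] at hi
      exact ⟨hiT, by rw [hmem i (by rintro rfl; exact ha.2 hiT) hi.2]; exact hi.1⟩
    obtain ⟨S', P, hWS', hP, hS'T, hS'⟩ := ih (S := Equiv.swap a g ⁻¹' S) (fun i ⟨hiS, hiT⟩ => by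
      have hia : i ≠ a := by rintro rfl; simp [Equiv.swap_apply_left, hgS] at hiS
      have hig : i ≠ g := by rintro rfl; exact hiT hgT
      exact (Finset.mem_insert.1 (hST ⟨(hmem i hia hig).1 hiS, hiT⟩)).resolve_left hia)
      ((hTS.sdiff (Set.finite_singleton g)).mono (by rw [Set.sdiff_sdiff]; exact hsub))
    refine ⟨S', insert g P, hWS'.trans (hW.apply_indicator_preimage_swap S a g), hP.insert g,
      hS'T, fun i ⟨hiT, hi⟩ => hS' ⟨hiT, ?_⟩⟩
    simp only [Set.mem_union, Set.mem_insert_iff, not_or] at hi ⊢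
    exact ⟨(hsub ⟨hiT, by simp [hi.1, hi.2.1]⟩).2, hi.2.2⟩

lemma WeakUpperAsymptoticPareto.apply_indicator_blockUnion_lt
    (hPareto : WeakUpperAsymptoticPareto W) (hAnon : Anonymous W) {K L : Set ℕ}
    (hKL : (K \ L).Finite) (hLK : (L \ K).Infinite) :
    W ((blockUnion K).indicator 1) < W ((blockUnion L).indicator 1) := by
  have hfin := blockUnion_finite hKL
  rw [← blockUnion_sdiff] at hfin
  obtain ⟨S', P, hWS', hP, hS'L, hS'⟩ := hAnon.exists_subset_of_sdiff_subset hfin.toFinset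
    hfin.coe_toFinset.superset (blockUnion_sdiff L K ▸ blockUnion_infinite hLK)
  rw [← hWS']
  refine hPareto.lt_of_subset hS'L (upperDensity_eq_one_of_blockUnion_sdiff_subset hLK hP ?_)
  rw [← blockUnion_sdiff, Set.sdiff_sdiff]
  exact hS'

end SocialWelfare

lemma exists_infinite_tendsto_right (q : ℕ → ℝ)
    (hq : ∀ a b, a < b → {k | q k ∈ Set.Ioo a b}.Infinite) (t : ℝ) :
    ∃ K : Set ℕ, K.Infinite ∧ (∀ k ∈ K, t < q k) ∧ ∀ s, t < s → {k ∈ K | s ≤ q k}.Finite := by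
  have hseq : ∀ m : ℕ, ∃ k, m < k ∧ q k ∈ Set.Ioo t (t + 1 / (m + 1)) := fun m =>
    let ⟨k, hk, hmk⟩ := (hq t _ (lt_add_of_pos_right t (by positivity))).exists_gt m
    ⟨k, hmk, hk⟩
  choose k hmk hk using hseq
  refine ⟨Set.range k, Set.infinite_of_not_bddAbove fun ⟨N, hN⟩ => (hmk N).not_ge (hN ⟨N, rfl⟩),
    fun _ ⟨m, hm⟩ => hm ▸ (hk m).1, fun s hs => ?_⟩
  obtain ⟨n, hn⟩ := exists_nat_one_div_lt (sub_pos.2 hs)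
  refine ((Set.finite_lt_nat n).image k).subset ?_
  rintro _ ⟨⟨m, rfl⟩, hm⟩
  refine ⟨m, show m < n from not_le.1 fun hnm => ?_, rfl⟩
  have : 1 / ((m : ℝ) + 1) ≤ 1 / (n + 1) := by gcongr
  linarith [(hk m).2]

lemma countable_of_lt_of_lt {α : Type*} [LinearOrder α] (f g : α → ℝ)
    (hfg : ∀ t, f t < g t) (hgf : ∀ t s, t < s → g t < f s) : Countable α := by
  choose r hr using fun t => exists_rat_btwn (hfg t)
  have hr_mono : StrictMono r := fun t s h => by
    exact_mod_cast (hr t).2.trans ((hgf t s h).trans (hr s).1)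
  exact hr_mono.injective.countable

lemma infinite_rat_cast_preimage_Ioo {e : ℕ → ℚ} (he : Function.Surjective e) {a b : ℝ}
    (hab : a < b) : {k | (e k : ℝ) ∈ Set.Ioo a b}.Infinite := by
  obtain ⟨c, hac, hcb⟩ := exists_rat_btwn hab
  obtain ⟨d, hcd, hdb⟩ := exists_rat_btwn hcb
  have hinf : (e ⁻¹' Set.Ioo c d).Infinite :=
    (Set.Ioo_infinite (by exact_mod_cast hcd)).preimage (he.range_eq ▸ Set.subset_univ _)
  exact hinf.mono fun k hk =>
    ⟨hac.trans (by exact_mod_cast hk.1), (Rat.cast_lt.2 hk.2).trans hdb⟩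

/-- there is no W : {0,1}^ℕ → ℝ satisfying Weak Upper Asymptotic
Pareto (W(x) > W(y) whenever x dominates y and {i : x_i > y_i} has upper
density 1) and Anonymity (W is invariant under transposing two coordinates). -/
theorem stmt_8 :
    ¬ ∃ W : (ℕ → Fin 2) → ℝ,
      (∀ x y : ℕ → Fin 2, (∀ i, y i ≤ x i) →
        upperDensity {i | y i < x i} = 1 → W y < W x) ∧
      (∀ (x : ℕ → Fin 2) (i j : ℕ), W (x ∘ Equiv.swap i j) = W x) := by
  rintro ⟨W, hPareto, hAnon⟩
  set V : Set ℕ → ℝ := fun K => W ((blockUnion K).indicator 1)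
  have hV {K L : Set ℕ} : (K \ L).Finite → (L \ K).Infinite → V K < V L :=
    WeakUpperAsymptoticPareto.apply_indicator_blockUnion_lt hPareto hAnon
  obtain ⟨e, he⟩ := exists_surjective_nat ℚ
  set q : ℕ → ℝ := fun k => e k
  have hq : ∀ a b, a < b → {k | q k ∈ Set.Ioo a b}.Infinite := fun _ _ =>
    infinite_rat_cast_preimage_Ioo he
  choose K hK_inf hK_gt hK_fin using exists_infinite_tendsto_right q hq
  set L : ℝ → Set ℕ := fun t => {k | q k < t}
  have hjump (t : ℝ) : V (L t) < V (L t ∪ K t) := by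
    refine hV (Set.finite_empty.subset fun k hk => hk.2 (Or.inl hk.1)) ?_
    rw [Set.union_sdiff_left]
    exact (hK_inf t).mono fun k hk => ⟨hk, not_lt.2 (hK_gt t k hk).le⟩
  have hgap (t s : ℝ) (hts : t < s) : V (L t ∪ K t) < V (L s) := by
    have hmid : t < (t + s) / 2 := by linarith
    refine hV ((hK_fin t s hts).subset ?_)
      (((hq ((t + s) / 2) s (by linarith)).sdiff (hK_fin t _ hmid)).mono ?_)
    · rintro k ⟨hk | hk, hks⟩
      · exact absurd (lt_trans hk hts) hks
      · exact ⟨hk, not_lt.1 hks⟩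
    · rintro k ⟨⟨hmk, hks⟩, hkK⟩
      refine ⟨hks, fun hk => hk.elim (fun hkt => ?_) fun hk => hkK ⟨hk, hmk.le⟩⟩
      exact (hmid.trans hmk).not_gt hkt
  exact not_countable (countable_of_lt_of_lt _ _ hjump hgap)
end

section
/- Let Y = {a, b} with a < b. There is no social welfare function W: Y^ℕ → ℝ representing a social welfare order that satisfies Upper Asymptotic Pareto and Anonymity. -/
/-!
For `t ≥ 0` let `A t` be the union of the blocks of `ℕ` labelled by the dyadic intervals lying
left of `t`, and `B t` that union together with the blocks of the dyadic intervals containing `t`.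
`B t \ A t` consists of infinitely many blocks `[N, 2N)`, so it has positive upper density and
Pareto gives `W (A t) < W (B t)`. For `t < s` the set `B t \ A s` is finite; transpositions move
it into `A s \ B t` without changing `W`, which yields a subset of `A s` missing a set of positive
upper density, so `W (B t) < W (A s)`. The intervals `(W (A t), W (B t))` are therefore nonempty
and pairwise disjoint for uncountably many `t`, which is impossible: each contains a rational.
-/

open Filter Topology

lemma upperDensity_pos_of_frequently_Ico_subset {S : Set ℕ}
    (h : ∃ᶠ N in atTop, Set.Ico N (2 * N) ⊆ S) : 0 < upperDensity S := by
  have hbdd : IsBoundedUnder (· ≤ ·) atTop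
      fun n : ℕ => (Nat.card ↥(S ∩ Set.Icc 1 n) : ℝ) / n := by
    refine isBoundedUnder_of ⟨1, fun n => div_le_one_of_le₀ ?_ n.cast_nonneg⟩
    rw [Nat.card_coe_set_eq, Nat.cast_le]
    calc (S ∩ Set.Icc 1 n).ncard ≤ (Set.Icc 1 n).ncard :=
          Set.ncard_le_ncard Set.inter_subset_right (Set.finite_Icc _ _)
      _ = n := by simp
  have hfreq : ∃ᶠ n : ℕ in atTop, (1 / 2 : ℝ) ≤ (Nat.card ↥(S ∩ Set.Icc 1 n) : ℝ) / n := by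
    refine (tendsto_id.const_mul_atTop' two_pos :
      Tendsto (fun N : ℕ => 2 * N) atTop atTop).frequently_map _ ?_
      (h.and_eventually (eventually_ge_atTop 1))
    rintro N ⟨hN, hN1⟩
    have hsub : Set.Ico N (2 * N) ⊆ S ∩ Set.Icc 1 (2 * N) :=
      fun i hi => ⟨hN hi, by simp only [Set.mem_Ico] at hi; exact ⟨by omega, hi.2.le⟩⟩
    have hcard : N ≤ Nat.card ↥(S ∩ Set.Icc 1 (2 * N)) := by
      rw [Nat.card_coe_set_eq]
      calc N = (Set.Ico N (2 * N)).ncard := by simp; omega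
        _ ≤ _ := Set.ncard_le_ncard hsub ((Set.finite_Icc _ _).inter_of_right _)
    rw [le_div_iff₀ (by positivity)]
    have : (N : ℝ) ≤ Nat.card ↥(S ∩ Set.Icc 1 (2 * N)) := by exact_mod_cast hcard
    push_cast
    linarith
  exact one_half_pos.trans_le (le_limsup_of_frequently_le hfreq hbdd)

/-- `ℕ` is cut into the dyadic blocks `[2 ^ c, 2 ^ (c + 1))`, and block `c` is labelled by the
pair `Nat.pairEquiv.symm c`. -/
def blockIndex (n : ℕ) : ℕ × ℕ := Nat.pairEquiv.symm (Nat.log 2 n)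

lemma blockIndex_surjective : Function.Surjective blockIndex := fun p =>
  ⟨2 ^ Nat.pairEquiv p, by
    rw [blockIndex, Nat.log_pow one_lt_two, Equiv.symm_apply_apply]⟩

lemma Ico_subset_preimage_blockIndex {I : Set (ℕ × ℕ)} {p : ℕ × ℕ} (hp : p ∈ I) :
    Set.Ico (2 ^ Nat.pairEquiv p) (2 * 2 ^ Nat.pairEquiv p) ⊆ blockIndex ⁻¹' I := by
  rintro n ⟨hlo, hhi⟩
  rw [← pow_succ'] at hhi
  rwa [Set.mem_preimage, blockIndex, Nat.log_eq_of_pow_le_of_lt_pow hlo hhi,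
    Equiv.symm_apply_apply]

lemma frequently_Ico_subset_preimage_blockIndex {I : Set (ℕ × ℕ)} (hI : I.Infinite) :
    ∃ᶠ N in atTop, Set.Ico N (2 * N) ⊆ blockIndex ⁻¹' I := by
  have hcodes : ∃ᶠ c in atTop, c ∈ Nat.pairEquiv '' I :=
    Nat.frequently_atTop_iff_infinite.2 (hI.image Nat.pairEquiv.injective.injOn)
  refine (tendsto_pow_atTop_atTop_of_one_lt one_lt_two).frequently_map _ ?_ hcodes
  rintro _ ⟨p, hp, rfl⟩
  exact Ico_subset_preimage_blockIndex hp

lemma upperDensity_preimage_blockIndex_sdiff_pos {I : Set (ℕ × ℕ)} (hI : I.Infinite)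
    {G : Set ℕ} (hG : G.Finite) : 0 < upperDensity (blockIndex ⁻¹' I \ G) := by
  obtain ⟨M, hM⟩ := hG.bddAbove
  refine upperDensity_pos_of_frequently_Ico_subset
    (((frequently_Ico_subset_preimage_blockIndex hI).and_eventually
      (eventually_gt_atTop M)).mono ?_)
  rintro N ⟨hsub, hMN⟩ n hn
  exact ⟨hsub hn, fun hnG => (hM hnG).not_gt (hMN.trans_le hn.1)⟩

lemma Set.Finite.preimage_blockIndex {I : Set (ℕ × ℕ)} (hI : I.Finite) :
    (blockIndex ⁻¹' I).Finite := by
  refine hI.preimage' fun p _ => (Set.finite_Iio (2 ^ (Nat.pairEquiv p + 1))).subset ?_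
  intro n hn
  have : Nat.log 2 n = Nat.pairEquiv p := by
    rw [← (Set.mem_singleton_iff.1 hn : blockIndex n = p), blockIndex, Equiv.apply_symm_apply]
  exact this ▸ Nat.lt_pow_succ_log_self one_lt_two n

/-- The pair `(k, j)` stands for the dyadic interval `[j / 2 ^ k, (j + 1) / 2 ^ k)`; for `t ≥ 0`,
`dyadicAt t` consists of the dyadic intervals containing `t`. -/
def dyadicBelow (t : ℝ) : Set (ℕ × ℕ) := {p | (p.2 + 1 : ℝ) ≤ t * 2 ^ p.1}

noncomputable def dyadicAt (t : ℝ) : Set (ℕ × ℕ) := Set.range fun k => (k, ⌊t * 2 ^ k⌋₊)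

lemma dyadicBelow_mono : Monotone dyadicBelow := fun _ _ hts _ hp =>
  le_trans (α := ℝ) hp (by gcongr)

lemma notMem_dyadicBelow_of_floor_le {t : ℝ} {k j : ℕ} (hj : ⌊t * 2 ^ k⌋₊ ≤ j) :
    (k, j) ∉ dyadicBelow t := fun (hmem : (j : ℝ) + 1 ≤ t * 2 ^ k) => by
  have : (⌊t * 2 ^ k⌋₊ : ℝ) ≤ j := by exact_mod_cast hj
  linarith [Nat.lt_floor_add_one (t * 2 ^ k)]

lemma floor_add_mem_dyadicBelow {t s : ℝ} (ht : 0 ≤ t) {k m : ℕ}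
    (h : (m + 1 : ℝ) ≤ (s - t) * 2 ^ k) : (k, ⌊t * 2 ^ k⌋₊ + m) ∈ dyadicBelow s := by
  show ((⌊t * 2 ^ k⌋₊ + m : ℕ) + 1 : ℝ) ≤ s * 2 ^ k
  push_cast
  linarith [Nat.floor_le (by positivity : 0 ≤ t * 2 ^ k)]

lemma disjoint_dyadicAt_dyadicBelow (t : ℝ) : Disjoint (dyadicAt t) (dyadicBelow t) :=
  Set.disjoint_left.2 <| by
    rintro _ ⟨k, rfl⟩
    exact notMem_dyadicBelow_of_floor_le le_rfl

lemma dyadicAt_infinite (t : ℝ) : (dyadicAt t).Infinite :=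
  Set.infinite_range_of_injective fun _ _ h => (Prod.ext_iff.1 h).1

lemma eventually_le_mul_two_pow {ε : ℝ} (hε : 0 < ε) (c : ℝ) :
    ∀ᶠ k : ℕ in atTop, c ≤ ε * 2 ^ k :=
  ((tendsto_pow_atTop_atTop_of_one_lt one_lt_two).const_mul_atTop hε).eventually_ge_atTop c

lemma finite_dyadicAt_diff_dyadicBelow {t s : ℝ} (ht : 0 ≤ t) (hts : t < s) :
    (dyadicAt t \ dyadicBelow s).Finite := by
  have hfin : {k : ℕ | ¬ 1 ≤ (s - t) * 2 ^ k}.Finite := by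
    simpa [← Nat.cofinite_eq_atTop] using eventually_le_mul_two_pow (sub_pos.2 hts) 1
  refine (hfin.image fun k => (k, ⌊t * 2 ^ k⌋₊)).subset ?_
  rintro _ ⟨⟨k, rfl⟩, hk⟩
  refine ⟨k, fun h1 => hk ?_, rfl⟩
  simpa using floor_add_mem_dyadicBelow (m := 0) ht (by simpa using h1)

lemma exists_infinite_subset_dyadicBelow_disjoint {t s : ℝ} (ht : 0 ≤ t) (hts : t < s) :
    ∃ I ⊆ dyadicBelow s, I.Infinite ∧ Disjoint I (dyadicBelow t ∪ dyadicAt t) := by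
  refine ⟨(fun k => (k, ⌊t * 2 ^ k⌋₊ + 1)) '' {k | 2 ≤ (s - t) * 2 ^ k}, ?_, ?_, ?_⟩
  · rintro _ ⟨k, hk : 2 ≤ (s - t) * 2 ^ k, rfl⟩
    exact floor_add_mem_dyadicBelow ht (by norm_num [hk])
  · refine Set.Infinite.image (fun _ _ _ _ h => (Prod.ext_iff.1 h).1) ?_
    exact Nat.frequently_atTop_iff_infinite.1
      (eventually_le_mul_two_pow (sub_pos.2 hts) 2).frequently
  · rw [Set.disjoint_union_right]
    constructor
    · rw [Set.disjoint_left]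
      rintro _ ⟨k, -, rfl⟩
      exact notMem_dyadicBelow_of_floor_le (Nat.le_succ _)
    · rw [Set.disjoint_left]
      rintro _ ⟨k, -, rfl⟩ ⟨k', h⟩
      obtain ⟨rfl, h⟩ := Prod.mk.inj h
      omega

lemma preimage_swap_sdiff_union {α : Type*} [DecidableEq α] {S F G : Set α} {f g : α}
    (hf : f ∈ S) (hfF : f ∉ F) (hfG : f ∉ G) (hgS : g ∉ S) (hgG : g ∉ G) :
    Equiv.swap f g ⁻¹' (S \ F ∪ G) = S \ insert f F ∪ insert g G := by
  ext n
  simp only [Set.mem_preimage, Equiv.swap_apply_def]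
  split_ifs <;> subst_vars <;> aesop

def SwapInvariant {α β : Type*} [DecidableEq α] (V : Set α → β) : Prop :=
  ∀ (S : Set α) (f g : α), V (Equiv.swap f g ⁻¹' S) = V S

lemma SwapInvariant.exists_exchange {α β : Type*} [DecidableEq α] {V : Set α → β}
    (hV : SwapInvariant V) {S T F : Set α}
    (hF : F.Finite) (hFS : F ⊆ S) (hT : T.Infinite) (hTS : Disjoint T S) :
    ∃ G ⊆ T, G.Finite ∧ V (S \ F ∪ G) = V S := by
  induction F, hF using Set.Finite.induction_on with
  | empty => exact ⟨∅, Set.empty_subset _, Set.finite_empty, by simp⟩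
  | @insert f F hfF _ ih =>
    obtain ⟨G, hGT, hG, hVG⟩ := ih ((Set.subset_insert f F).trans hFS)
    obtain ⟨g, hgT, hgG⟩ := (hT.sdiff hG).nonempty
    have hfS : f ∈ S := hFS (Set.mem_insert f F)
    refine ⟨insert g G, Set.insert_subset hgT hGT, hG.insert g, ?_⟩
    rw [← preimage_swap_sdiff_union hfS hfF (fun hfG => hTS.ne_of_mem (hGT hfG) hfS rfl)
      (hTS.notMem_of_mem_left hgT) hgG, hV, hVG]

def UpperAsymptoticPareto (V : Set ℕ → ℝ) : Prop :=
  ∀ ⦃S S' D : Set ℕ⦄, S ⊆ S' → D ⊆ S' \ S → 0 < upperDensity D → V S < V S'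

namespace UpperAsymptoticPareto

variable {V : Set ℕ → ℝ}

lemma lt_union_dyadicAt (hP : UpperAsymptoticPareto V) (t : ℝ) :
    V (blockIndex ⁻¹' dyadicBelow t) < V (blockIndex ⁻¹' (dyadicBelow t ∪ dyadicAt t)) := by
  refine hP (Set.preimage_mono Set.subset_union_left) ?_
    (by simpa using
      upperDensity_preimage_blockIndex_sdiff_pos (dyadicAt_infinite t) Set.finite_empty)
  rw [← Set.preimage_sdiff, Set.union_sdiff_left,
    (disjoint_dyadicAt_dyadicBelow t).sdiff_eq_left]

lemma union_dyadicAt_lt (hP : UpperAsymptoticPareto V) (hV : SwapInvariant V) {t s : ℝ}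
    (ht : 0 ≤ t) (hts : t < s) :
    V (blockIndex ⁻¹' (dyadicBelow t ∪ dyadicAt t)) < V (blockIndex ⁻¹' dyadicBelow s) := by
  set B := blockIndex ⁻¹' (dyadicBelow t ∪ dyadicAt t)
  set A := blockIndex ⁻¹' dyadicBelow s
  obtain ⟨I, hIs, hI, hIt⟩ := exists_infinite_subset_dyadicBelow_disjoint ht hts
  have hBA : (B \ A).Finite := by
    refine (finite_dyadicAt_diff_dyadicBelow ht hts).preimage_blockIndex.subset ?_
    rintro n ⟨hB | hB, hA⟩
    · exact absurd (dyadicBelow_mono hts.le hB) hA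
    · exact ⟨hB, hA⟩
  obtain ⟨G, hGI, hG, hVG⟩ := hV.exists_exchange hBA Set.sdiff_subset
    (hI.preimage (blockIndex_surjective.range_eq ▸ Set.subset_univ I))
    (hIt.preimage blockIndex)
  have hIA : blockIndex ⁻¹' I ⊆ A := Set.preimage_mono hIs
  rw [← hVG, Set.sdiff_sdiff_right_self]
  refine hP (Set.union_subset Set.inter_subset_right (hGI.trans hIA)) ?_
    (upperDensity_preimage_blockIndex_sdiff_pos hI hG)
  rintro n ⟨hnI, hnG⟩
  refine ⟨hIA hnI, ?_⟩
  rintro (⟨hnB, -⟩ | hnG')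
  · exact (hIt.preimage blockIndex).notMem_of_mem_left hnI hnB
  · exact hnG hnG'

theorem not_swapInvariant (hP : UpperAsymptoticPareto V) : ¬ SwapInvariant V := by
  intro hV
  choose q hq using fun t => exists_rat_btwn (hP.lt_union_dyadicAt t)
  have hq_mono : StrictMonoOn q (Set.Ici 0) := fun t ht s _ hts => by
    have := (hq t).2.trans ((hP.union_dyadicAt_lt hV ht hts).trans (hq s).1)
    exact_mod_cast this
  have hcount : (Set.Ici (0 : ℝ)).Countable :=
    (Set.mapsTo_univ q _).countable_of_injOn hq_mono.injOn Set.countable_univ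
  have := hcount.le_aleph0
  rw [Cardinal.mk_Ici_real] at this
  exact this.not_gt Cardinal.aleph0_lt_continuum

end UpperAsymptoticPareto

open Classical in
noncomputable def binaryStream (a b : ℝ) (S : Set ℕ) : ℕ → ℝ := fun n => if n ∈ S then b else a

lemma binaryStream_eq_or_eq (a b : ℝ) (S : Set ℕ) (n : ℕ) :
    binaryStream a b S n = a ∨ binaryStream a b S n = b := by
  unfold binaryStream
  split_ifs <;> simp

lemma binaryStream_comp_swap (a b : ℝ) (S : Set ℕ) (f g : ℕ) :
    binaryStream a b S ∘ Equiv.swap f g = binaryStream a b (Equiv.swap f g ⁻¹' S) := rfl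

lemma binaryStream_le_of_subset {a b : ℝ} (hab : a ≤ b) {S S' : Set ℕ} (h : S ⊆ S') (n : ℕ) :
    binaryStream a b S n ≤ binaryStream a b S' n := by
  unfold binaryStream
  split_ifs with hS hS' <;> first | exact le_rfl | exact hab | exact absurd (h hS) hS'

lemma binaryStream_lt_of_mem_sdiff {a b : ℝ} (hab : a < b) {S S' : Set ℕ} {n : ℕ}
    (h : n ∈ S' \ S) : binaryStream a b S n < binaryStream a b S' n := by
  simpa [binaryStream, h.1, h.2] using hab

/-- for Y = {a,b} with a < b, there is no social welfare function
W representing a complete transitive order on Y^ℕ that satisfies Upper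
Asymptotic Pareto and Anonymity.  Streams are functions ℕ → ℝ with values in
{a, b}. -/
theorem stmt_9 (a b : ℝ) (hab : a < b) :
    ¬ ∃ (R : (ℕ → ℝ) → (ℕ → ℝ) → Prop) (W : (ℕ → ℝ) → ℝ),
      -- completeness on Y^ℕ
      (∀ x y : ℕ → ℝ, (∀ i, x i = a ∨ x i = b) → (∀ i, y i = a ∨ y i = b) →
        (R x y ∨ R y x)) ∧
      -- transitivity on Y^ℕ
      (∀ x y z : ℕ → ℝ, (∀ i, x i = a ∨ x i = b) → (∀ i, y i = a ∨ y i = b) →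
        (∀ i, z i = a ∨ z i = b) → R x y → R y z → R x z) ∧
      -- W represents R on Y^ℕ
      (∀ x y : ℕ → ℝ, (∀ i, x i = a ∨ x i = b) → (∀ i, y i = a ∨ y i = b) →
        (R x y ↔ W y ≤ W x)) ∧
      -- Anonymity
      (∀ x : ℕ → ℝ, (∀ i, x i = a ∨ x i = b) → ∀ i j : ℕ,
        R x (x ∘ Equiv.swap i j) ∧ R (x ∘ Equiv.swap i j) x) ∧
      -- Upper Asymptotic Pareto
      (∀ x y : ℕ → ℝ, (∀ i, x i = a ∨ x i = b) → (∀ i, y i = a ∨ y i = b) →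
        (∀ i, y i ≤ x i) →
        ∀ S : Set ℕ, 0 < upperDensity S → (∀ i ∈ S, y i < x i) →
        (R x y ∧ ¬ R y x)) := by
  rintro ⟨R, W, -, -, hrep, hanon, hpar⟩
  have hY := binaryStream_eq_or_eq a b
  have hP : UpperAsymptoticPareto fun S => W (binaryStream a b S) :=
    fun S S' D hSS' hD hdens => lt_of_not_ge fun hle =>
      (hpar _ _ (hY S') (hY S) (binaryStream_le_of_subset hab.le hSS') D hdens
        fun _ hn => binaryStream_lt_of_mem_sdiff hab (hD hn)).2 ((hrep _ _ (hY S) (hY S')).2 hle)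
  refine hP.not_swapInvariant fun S f g => ?_
  obtain ⟨hle, hge⟩ := hanon _ (hY S) f g
  rw [binaryStream_comp_swap] at hle hge
  exact le_antisymm ((hrep _ _ (hY S) (hY _)).1 hle) ((hrep _ _ (hY _) (hY S)).1 hge)
end

section
/- Let f(n)=n! and let T = {t_1 < t_2 < ...} be an infinite subset of ℕ with blocks I_k(T) as in the paper. If Δ = ⋃_{k≥1} I_{4k+2}(T) ∪ I_2(T), then the upper asymptotic density of Δ is 1. -/
open Filter Topology

/-- Blocks of an infinite set T = {t_1 < t_2 < ⋯}: I_1(T) = [0, f(t_1)) ∩ ℕ,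
I_k(T) = [f(t_{k-1}), f(t_k)) ∩ ℕ for k > 1, with f(n) = n!. -/
def enumBlock (t : ℕ → ℕ) (k : ℕ) : Set ℕ :=
  if k ≤ 1 then Set.Ico 0 (Nat.factorial (t 1))
  else Set.Ico (Nat.factorial (t (k - 1))) (Nat.factorial (t k))

/-!
Since `t` is strictly increasing, `t (4k+2) > t (4k+1) =: m`, so the block
`I_{4k+2} = [m!, t(4k+2)!)` ends beyond `(m+1)!` and is at least `m` times longer than everything
below it.
Evaluating the counting ratio at the right end of this block gives at least `1 - 1/m`, and
`m ≥ 4k + 1 → ∞`.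
-/

open Set Nat

noncomputable def densityRatio (S : Set ℕ) (n : ℕ) : ℝ :=
  (Nat.card ↥(S ∩ Icc 1 n) : ℝ) / n

lemma densityRatio_nonneg (S : Set ℕ) (n : ℕ) : 0 ≤ densityRatio S n := by
  unfold densityRatio
  positivity

lemma densityRatio_le_one (S : Set ℕ) (n : ℕ) : densityRatio S n ≤ 1 := by
  rcases n.eq_zero_or_pos with rfl | hn
  · simp [densityRatio]
  have hcard : (S ∩ Icc 1 n).ncard ≤ n := by
    simpa using ncard_le_ncard inter_subset_right (finite_Icc 1 n)
  rw [densityRatio, div_le_one (by exact_mod_cast hn), Nat.card_coe_set_eq]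
  exact_mod_cast hcard

lemma one_sub_div_le_densityRatio {S : Set ℕ} {a n : ℕ} (ha : 1 ≤ a) (hn : 0 < n)
    (hS : Icc a n ⊆ S) : 1 - (a : ℝ) / n ≤ densityRatio S n := by
  have hcard : n + 1 - a ≤ (S ∩ Icc 1 n).ncard := by
    simpa using ncard_le_ncard (subset_inter hS (Icc_subset_Icc_left ha))
      ((finite_Icc 1 n).subset inter_subset_right)
  have hcardR : (n : ℝ) - a ≤ (S ∩ Icc 1 n).ncard := by
    have : (n : ℝ) ≤ (S ∩ Icc 1 n).ncard + a := by exact_mod_cast (by omega)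
    linarith
  rw [densityRatio, Nat.card_coe_set_eq, one_sub_div (by positivity)]
  gcongr

lemma upperDensity_le_one (S : Set ℕ) : upperDensity S ≤ 1 :=
  limsup_le_of_le (isBoundedUnder_of ⟨0, densityRatio_nonneg S⟩).isCoboundedUnder_le
    (Eventually.of_forall (densityRatio_le_one S))

lemma one_le_upperDensity_of_tendsto {S : Set ℕ} {a n : ℕ → ℕ} (ha : ∀ k, 1 ≤ a k)
    (hS : ∀ k, Icc (a k) (n k) ⊆ S) (hlim : Tendsto (fun k => (n k : ℝ) / a k) atTop atTop) :
    1 ≤ upperDensity S := by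
  have hn : Tendsto n atTop atTop := by
    refine tendsto_natCast_atTop_iff.1 (tendsto_atTop_mono (fun k => ?_) hlim)
    exact div_le_self (Nat.cast_nonneg _) (by exact_mod_cast ha k)
  have hratio : Tendsto (fun k => 1 - ((n k : ℝ) / a k)⁻¹) atTop (𝓝 1) := by
    simpa using tendsto_const_nhds.sub (tendsto_inv_atTop_zero.comp hlim)
  refine le_of_forall_lt_imp_le_of_dense fun c hc => ?_
  have hev : ∀ᶠ k in atTop, c ≤ densityRatio S (n k) := by
    filter_upwards [hratio.eventually (eventually_gt_nhds hc), hn.eventually_gt_atTop 0]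
      with k hck hnk
    rw [inv_div] at hck
    exact hck.le.trans (one_sub_div_le_densityRatio (ha k) hnk (hS k))
  exact le_limsup_of_frequently_le (hn.frequently hev.frequently)
    (isBoundedUnder_of ⟨1, densityRatio_le_one S⟩)

lemma enumBlock_of_two_le (t : ℕ → ℕ) {k : ℕ} (hk : 2 ≤ k) :
    enumBlock t k = Ico (t (k - 1))! (t k)! :=
  if_neg (by omega)

lemma factorial_mul_self_le_factorial_sub_one {m m' : ℕ} (h : m < m') : m ! * m ≤ (m')! - 1 := by
  refine Nat.le_sub_one_of_lt (lt_of_lt_of_le ?_ (Nat.factorial_le h))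
  rw [Nat.factorial_succ, add_mul, one_mul, mul_comm]
  exact Nat.lt_add_of_pos_right m.factorial_pos

/-- Δ = I_2(T) ∪ ⋃_{k≥1} I_{4k+2}(T) has upper asymptotic
density 1. -/
theorem stmt_14 (t : ℕ → ℕ) (ht : StrictMono t) :
    upperDensity (enumBlock t 2 ∪ ⋃ k ∈ Set.Ici 1, enumBlock t (4 * k + 2)) = 1 := by
  have hblock : ∀ k, enumBlock t (4 * k + 2) ⊆
      enumBlock t 2 ∪ ⋃ k ∈ Set.Ici 1, enumBlock t (4 * k + 2) := by
    rintro (_ | k)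
    · exact subset_union_left
    · exact subset_union_of_subset_right
        (subset_biUnion_of_mem (u := fun k => enumBlock t (4 * k + 2)) (mem_Ici.2 k.succ_pos)) _
  refine le_antisymm (upperDensity_le_one _) (one_le_upperDensity_of_tendsto
    (a := fun k => (t (4 * k + 1))!) (n := fun k => (t (4 * k + 2))! - 1)
    (fun k => Nat.factorial_pos _) (fun k x hx => hblock k ?_) ?_)
  · rw [enumBlock_of_two_le t (by omega), show 4 * k + 2 - 1 = 4 * k + 1 by omega]
    have := Nat.factorial_pos (t (4 * k + 2))
    exact ⟨hx.1, by have := hx.2; omega⟩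
  · refine tendsto_atTop_mono (fun k => ?_) tendsto_natCast_atTop_atTop
    have hk : k ≤ t (4 * k + 1) := (by omega : k ≤ 4 * k + 1).trans (ht.id_le _)
    have hmul := factorial_mul_self_le_factorial_sub_one (ht (by omega : 4 * k + 1 < 4 * k + 2))
    rw [le_div_iff₀ (by positivity)]
    exact_mod_cast (Nat.mul_le_mul_right _ hk).trans ((mul_comm _ _).trans_le hmul)
end

section
/- Let f(n)=n! and let T = {t_1 < t_2 < ...} be an infinite subset of ℕ with blocks I_k(T). The set Δ = I_2(T) ∪ ⋃_{k≥1} I_{4k+2}(T) has lower asymptotic density 0. -/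
open Filter Topology

lemma key_card (t : ℕ → ℕ) (ht : StrictMono t) (m : ℕ) :
    Nat.card ↥((enumBlock t 2 ∪ ⋃ k ∈ Set.Ici 1, enumBlock t (4 * k + 2)) ∩
      Set.Icc 1 (Nat.factorial (t (4 * m + 5)))) * (m + 1) ≤
      Nat.factorial (t (4 * m + 5)) := by
  set a := t (4 * m + 2) with ha_def
  set N := Nat.factorial (t (4 * m + 5)) with hN_def
  have hsub : (enumBlock t 2 ∪ ⋃ k ∈ Set.Ici 1, enumBlock t (4 * k + 2)) ∩
      Set.Icc 1 N ⊆ Set.Ico 0 (Nat.factorial a) ∪ {N} := by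
    rintro x ⟨hx, hx1, hxN⟩
    rcases hx with hx | hx
    · left
      simp only [enumBlock, if_neg (by omega : ¬ (2:ℕ) ≤ 1)] at hx
      refine ⟨Nat.zero_le _, lt_of_lt_of_le hx.2 ?_⟩
      exact Nat.factorial_le (ht.monotone (by omega))
    · simp only [Set.mem_iUnion, Set.mem_Ici] at hx
      obtain ⟨k, hk1, hxk⟩ := hx
      simp only [enumBlock, if_neg (by omega : ¬ 4 * k + 2 ≤ 1)] at hxk
      have hk' : 4 * k + 2 - 1 = 4 * k + 1 := by omega
      rw [hk'] at hxk
      by_cases hkm : k ≤ m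
      · left
        refine ⟨Nat.zero_le _, lt_of_lt_of_le hxk.2 ?_⟩
        exact Nat.factorial_le (ht.monotone (by omega))
      · right
        have h1 : N ≤ Nat.factorial (t (4 * k + 1)) :=
          Nat.factorial_le (ht.monotone (by omega))
        have := hxk.1
        simp only [Set.mem_singleton_iff]
        omega
  have hcard : Nat.card ↥((enumBlock t 2 ∪ ⋃ k ∈ Set.Ici 1, enumBlock t (4 * k + 2)) ∩
      Set.Icc 1 N) ≤ Nat.factorial a + 1 := by
    rw [Nat.card_coe_set_eq]
    calc _ ≤ (Set.Ico 0 (Nat.factorial a) ∪ {N}).ncard :=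
          Set.ncard_le_ncard hsub (((Set.finite_Ico _ _).union (Set.finite_singleton _)))
      _ ≤ (Set.Ico 0 (Nat.factorial a)).ncard + ({N} : Set ℕ).ncard := Set.ncard_union_le _ _
      _ ≤ Nat.factorial a + 1 := by simp [Set.ncard_eq_toFinset_card']
  have ham : 4 * m + 2 ≤ a := ht.le_apply
  have hta : a + 3 ≤ t (4 * m + 5) := by
    have h1 := ht (show 4 * m + 2 < 4 * m + 3 by omega)
    have h2 := ht (show 4 * m + 3 < 4 * m + 4 by omega)
    have h3 := ht (show 4 * m + 4 < 4 * m + 5 by omega)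
    omega
  have hNge : Nat.factorial (a + 3) ≤ N := Nat.factorial_le hta
  have hfac3 : Nat.factorial (a + 3) = (a + 3) * ((a + 2) * ((a + 1) * Nat.factorial a)) := by
    rw [Nat.factorial_succ, Nat.factorial_succ, Nat.factorial_succ]
  have hpos : 1 ≤ Nat.factorial a := Nat.one_le_iff_ne_zero.mpr (Nat.factorial_ne_zero a)
  calc Nat.card ↥((enumBlock t 2 ∪ ⋃ k ∈ Set.Ici 1, enumBlock t (4 * k + 2)) ∩
        Set.Icc 1 N) * (m + 1) ≤ (Nat.factorial a + 1) * (m + 1) :=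
        Nat.mul_le_mul_right _ hcard
    _ ≤ (2 * Nat.factorial a) * (a + 2) := Nat.mul_le_mul (by omega) (by omega)
    _ ≤ ((a + 1) * Nat.factorial a) * (a + 2) :=
        Nat.mul_le_mul_right _ (Nat.mul_le_mul_right _ (by omega))
    _ = 1 * ((a + 2) * ((a + 1) * Nat.factorial a)) := by ring
    _ ≤ (a + 3) * ((a + 2) * ((a + 1) * Nat.factorial a)) :=
        Nat.mul_le_mul_right _ (by omega)
    _ = Nat.factorial (a + 3) := hfac3.symm
    _ ≤ N := hNge

/-- Δ = I_2(T) ∪ ⋃_{k≥1} I_{4k+2}(T) has lower asymptotic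
density 0. -/
theorem stmt_15 (t : ℕ → ℕ) (ht : StrictMono t) :
    lowerDensity (enumBlock t 2 ∪ ⋃ k ∈ Set.Ici 1, enumBlock t (4 * k + 2)) = 0 := by
  set S := enumBlock t 2 ∪ ⋃ k ∈ Set.Ici 1, enumBlock t (4 * k + 2) with hS
  set d : ℕ → ℝ := fun n => (Nat.card ↥(S ∩ Set.Icc 1 n) : ℝ) / (n : ℝ) with hd
  have hdnn : ∀ n : ℕ, 0 ≤ d n := fun n => by simp only [hd]; positivity
  have hbdd : IsBoundedUnder (· ≥ ·) atTop d :=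
    isBoundedUnder_of ⟨0, fun n => hdnn n⟩
  have hbdd' : IsBoundedUnder (· ≤ ·) atTop d := by
    refine isBoundedUnder_of ⟨1, fun n => ?_⟩
    simp only [hd]
    rcases Nat.eq_zero_or_pos n with h | h
    · simp [h]
    · rw [div_le_one (by exact_mod_cast h)]
      exact_mod_cast card_inter_Icc_le S n
  refine le_antisymm ?_ ?_
  · refine le_of_forall_pos_le_add fun ε hε => ?_
    rw [zero_add]
    refine liminf_le_of_frequently_le ?_ hbdd
    rw [frequently_atTop]
    intro n₀
    obtain ⟨M, hM⟩ := exists_nat_gt (1 / ε)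
    refine ⟨Nat.factorial (t (4 * (max n₀ M) + 5)), ?_, ?_⟩
    · calc n₀ ≤ 4 * (max n₀ M) + 5 := by
            have := le_max_left n₀ M; omega
        _ ≤ t (4 * (max n₀ M) + 5) := ht.le_apply
        _ ≤ _ := Nat.self_le_factorial _
    · set m := max n₀ M with hm
      have hkey := key_card t ht m
      set N := Nat.factorial (t (4 * m + 5)) with hN
      have hNpos : 0 < N := Nat.factorial_pos _
      have h1 : d N ≤ 1 / (m + 1 : ℝ) := by
        rw [hd, div_le_div_iff₀ (by exact_mod_cast hNpos) (by positivity)]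
        calc (Nat.card ↥(S ∩ Set.Icc 1 N) : ℝ) * ((m : ℝ) + 1)
            = ((Nat.card ↥(S ∩ Set.Icc 1 N) * (m + 1) : ℕ) : ℝ) := by push_cast; ring
          _ ≤ (N : ℝ) := by exact_mod_cast hkey
          _ = 1 * (N : ℝ) := (one_mul _).symm
      refine h1.trans ?_
      rw [div_le_iff₀ (by positivity)]
      have hMm : (M : ℝ) ≤ (m : ℝ) := by exact_mod_cast le_max_right n₀ M
      have : 1 / ε < (m : ℝ) + 1 := by linarith
      rw [div_lt_iff₀ hε] at this
      linarith
  · exact le_liminf_of_le (hbdd'.isCoboundedUnder_ge)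
      (Eventually.of_forall fun n => hdnn n)
end

section
/- Suppose ≿ is a complete transitive relation on {a,b}^ℕ (a<b) satisfying Weak Upper Asymptotic Pareto. Let T be an infinite subset of ℕ with blocks I_k(T), and let x(T), y(T) be the alternating streams defined in the paper. If S = T \ {t_1, t_{4k+1}, t_{4k+2} : k ∈ ℕ}, then y(S) ≺ x(T) and y(T) ≺ x(S); hence if x(T) ≺ y(T), then by transitivity y(S) ≺ x(S). -/
open Filter Topology

/-- Index of the block of the factorial partition determined by the
enumeration `t` (1-indexed) containing `m`: the least k ≥ 1 with m < f(t_k),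
so that m ∈ I_k(T) = [f(t_{k-1}), f(t_k)) (with I_1(T) = [0, f(t_1))),
where f(n) = n!. -/
noncomputable def blockIdx (t : ℕ → ℕ) (m : ℕ) : ℕ :=
  sInf {k : ℕ | 1 ≤ k ∧ m < Nat.factorial (t k)}

/-- The stream x(N): value a on blocks with odd index, b on even ones. -/
noncomputable def xStream (a b : ℝ) (t : ℕ → ℕ) (m : ℕ) : ℝ :=
  if Odd (blockIdx t m) then a else b

/-- The stream y(N): value a on I_1(N) and on blocks with even index,
b on blocks with odd index k > 1. -/
noncomputable def yStream (a b : ℝ) (t : ℕ → ℕ) (m : ℕ) : ℝ :=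
  if blockIdx t m = 1 ∨ Even (blockIdx t m) then a else b

/-- Increasing enumeration (1-indexed) of the index set
ℕ \ {1, 4k+1, 4k+2 : k ≥ 1} = {2, 3, 4, 7, 8, 11, 12, ...}, so that the
enumeration of S = T \ {t_1, t_{4k+1}, t_{4k+2} : k ∈ ℕ} is t ∘ subIdx. -/
def subIdx (k : ℕ) : ℕ :=
  if k ≤ 3 then k + 1 else if Even k then 2 * k - 1 else 2 * k - 2

lemma card_inter_Icc_div_le_one (S : Set ℕ) (n : ℕ) :
    (Nat.card ↥(S ∩ Set.Icc 1 n) : ℝ) / n ≤ 1 :=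
  div_le_one_of_le₀ (mod_cast card_inter_Icc_le S n) n.cast_nonneg

lemma upperDensity_eq_one_of_tendsto {S : Set ℕ} {φ : ℕ → ℕ} (hφ : Tendsto φ atTop atTop)
    (h : Tendsto (fun l => (Nat.card ↥(S ∩ Set.Icc 1 (φ l)) : ℝ) / φ l) atTop (𝓝 1)) :
    upperDensity S = 1 := by
  refine le_antisymm ?_ (le_of_forall_sub_le fun ε hε => ?_)
  · exact limsup_le_of_le (isCoboundedUnder_le_of_le atTop fun n => by positivity)
      (.of_forall (card_inter_Icc_div_le_one S))
  · have hfreq := hφ.frequently (p := fun n => 1 - ε ≤ (Nat.card ↥(S ∩ Set.Icc 1 n) : ℝ) / n)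
      (h.eventually_const_le (sub_lt_self 1 hε)).frequently
    exact le_limsup_of_frequently_le hfreq (isBoundedUnder_of ⟨1, card_inter_Icc_div_le_one S⟩)

lemma upperDensity_eq_one_of_Ico_subset {S : Set ℕ} {A B : ℕ → ℕ} (hA : ∀ l, 1 ≤ A l)
    (hsub : ∀ l, Set.Ico (A l) (B l) ⊆ S) (hB : Tendsto B atTop atTop)
    (hAB : Tendsto (fun l => (A l : ℝ) / B l) atTop (𝓝 0)) :
    upperDensity S = 1 := by
  refine upperDensity_eq_one_of_tendsto hB (tendsto_of_tendsto_of_tendsto_of_le_of_le'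
    (by simpa using hAB.const_sub 1) tendsto_const_nhds ?_
    (.of_forall fun l => card_inter_Icc_div_le_one S (B l)))
  filter_upwards [hB.eventually_gt_atTop 0] with l hBl
  have hblock : Set.Ico (A l) (B l) ⊆ S ∩ Set.Icc 1 (B l) := fun x hx =>
    ⟨hsub l hx, (hA l).trans hx.1, hx.2.le⟩
  have hcard : B l - A l ≤ Nat.card ↥(S ∩ Set.Icc 1 (B l)) := by
    simpa using Nat.card_mono ((Set.finite_Icc 1 (B l)).subset Set.inter_subset_right) hblock
  have hBl' : (0 : ℝ) < B l := mod_cast hBl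
  rw [one_sub_div hBl'.ne']
  gcongr
  calc (B l : ℝ) - A l ≤ ((B l - A l : ℕ) : ℝ) := by
        rw [sub_le_iff_le_add]; exact_mod_cast le_tsub_add
    _ ≤ _ := mod_cast hcard

open Nat in
lemma tendsto_factorial_div_factorial_succ {t : ℕ → ℕ} (ht : StrictMono t) :
    Tendsto (fun k => ((t k)! : ℝ) / (t (k + 1))!) atTop (𝓝 0) := by
  refine tendsto_of_tendsto_of_tendsto_of_le_of_le tendsto_const_nhds
    (tendsto_one_div_add_atTop_nhds_zero_nat.comp ht.tendsto_atTop) (fun k => by positivity)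
    fun k => ?_
  have hsucc : (t k + 1)! ≤ (t (k + 1))! := Nat.factorial_le (ht k.lt_succ_self)
  calc ((t k)! : ℝ) / (t (k + 1))! ≤ (t k)! / (t k + 1)! := by gcongr
    _ = 1 / ((t k : ℝ) + 1) := by
      rw [Nat.factorial_succ]; push_cast; field_simp

section BlockIdx

variable {t : ℕ → ℕ}

lemma blockIdx_spec (ht : StrictMono t) (m : ℕ) :
    1 ≤ blockIdx t m ∧ m < (t (blockIdx t m)).factorial :=
  Nat.sInf_mem (show {k | 1 ≤ k ∧ m < (t k).factorial}.Nonempty from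
    ⟨m + 1, m.succ_pos, m.lt_succ_self.trans_le (ht.le_apply.trans (Nat.self_le_factorial _))⟩)

lemma lt_factorial_iff_blockIdx_le (ht : StrictMono t) {m i : ℕ} (hi : 1 ≤ i) :
    m < (t i).factorial ↔ blockIdx t m ≤ i :=
  ⟨fun h => Nat.sInf_le ⟨hi, h⟩, fun h =>
    (blockIdx_spec ht m).2.trans_le (Nat.factorial_le (ht.monotone h))⟩

lemma blockIdx_eq_succ (ht : StrictMono t) {m k : ℕ} (hk : 1 ≤ k) (h₁ : (t k).factorial ≤ m)
    (h₂ : m < (t (k + 1)).factorial) : blockIdx t m = k + 1 := by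
  have hle := (lt_factorial_iff_blockIdx_le ht (Nat.le_succ_of_le hk)).1 h₂
  have hgt := mt (lt_factorial_iff_blockIdx_le ht hk).2 h₁.not_gt
  omega

lemma blockIdx_comp (ht : StrictMono t) {s : ℕ → ℕ} (hs : ∀ j, 1 ≤ s j) (m : ℕ) :
    blockIdx (t ∘ s) m = sInf {j | 1 ≤ j ∧ blockIdx t m ≤ s j} := by
  simp only [blockIdx, Function.comp_apply]
  congr 1
  ext j
  exact and_congr_right fun _ => lt_factorial_iff_blockIdx_le ht (hs j)

end BlockIdx

-- The block `I_k(T)` lies inside `I_{subBlock k}(S)`.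
def subBlock (k : ℕ) : ℕ :=
  if k ≤ 2 then 1 else if k % 4 = 0 then k / 2 + 1 else 2 * (k / 4) + 2

lemma one_le_subIdx (j : ℕ) : 1 ≤ subIdx j := by
  unfold subIdx; split_ifs <;> omega

lemma sInf_le_subIdx_eq_subBlock (k : ℕ) :
    sInf {j | 1 ≤ j ∧ k ≤ subIdx j} = subBlock k := by
  have hmem : subBlock k ∈ {j | 1 ≤ j ∧ k ≤ subIdx j} := by
    simp only [Set.mem_ofPred_eq, subIdx, subBlock, Nat.even_iff]; split_ifs <;> omega
  refine le_antisymm (Nat.sInf_le hmem) (le_csInf ⟨_, hmem⟩ ?_)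
  rintro j ⟨hj, hkj⟩
  simp only [subIdx, subBlock, Nat.even_iff] at hkj ⊢
  split_ifs at hkj ⊢ <;> omega

lemma blockIdx_comp_subIdx {t : ℕ → ℕ} (ht : StrictMono t) (m : ℕ) :
    blockIdx (t ∘ subIdx) m = subBlock (blockIdx t m) := by
  rw [blockIdx_comp ht one_le_subIdx, sInf_le_subIdx_eq_subBlock]

lemma subBlock_eq_one_or_even {k : ℕ} (hk : Odd k) : subBlock k = 1 ∨ Even (subBlock k) := by
  rw [Nat.odd_iff] at hk
  simp only [subBlock, Nat.even_iff]; split_ifs <;> omega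

lemma eq_one_or_even_of_odd_subBlock {k : ℕ} (hk : 1 ≤ k) (h : Odd (subBlock k)) :
    k = 1 ∨ Even k := by
  simp only [subBlock, Nat.odd_iff, Nat.even_iff] at h ⊢; split_ifs at h <;> omega

lemma even_subBlock_four_mul_add_six (l : ℕ) : Even (subBlock (4 * l + 6)) := by
  simp only [subBlock, Nat.even_iff]; split_ifs <;> omega

section Streams

variable {a b : ℝ}

lemma xStream_eq_or_eq (t : ℕ → ℕ) (m : ℕ) : xStream a b t m = a ∨ xStream a b t m = b := by
  unfold xStream; split_ifs <;> simp

lemma yStream_eq_or_eq (t : ℕ → ℕ) (m : ℕ) : yStream a b t m = a ∨ yStream a b t m = b := by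
  unfold yStream; split_ifs <;> simp

lemma yStream_le_xStream (hab : a ≤ b) {t t' : ℕ → ℕ} {m : ℕ}
    (h : Odd (blockIdx t m) → blockIdx t' m = 1 ∨ Even (blockIdx t' m)) :
    yStream a b t' m ≤ xStream a b t m := by
  unfold xStream yStream
  split_ifs with hy hx hx <;> first | exact le_rfl | exact hab | exact absurd (h hx) hy

lemma yStream_lt_xStream (hab : a < b) {t t' : ℕ → ℕ} {m : ℕ} (h' : Even (blockIdx t' m))
    (h : Even (blockIdx t m)) : yStream a b t' m < xStream a b t m := by
  rwa [yStream, xStream, if_pos (Or.inr h'), if_neg (Nat.not_odd_iff_even.2 h)]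

lemma yStream_subIdx_le_xStream (hab : a ≤ b) {t : ℕ → ℕ} (ht : StrictMono t) (m : ℕ) :
    yStream a b (t ∘ subIdx) m ≤ xStream a b t m :=
  yStream_le_xStream hab fun h => by
    rw [blockIdx_comp_subIdx ht]; exact subBlock_eq_one_or_even h

lemma yStream_le_xStream_subIdx (hab : a ≤ b) {t : ℕ → ℕ} (ht : StrictMono t) (m : ℕ) :
    yStream a b t m ≤ xStream a b (t ∘ subIdx) m :=
  yStream_le_xStream hab fun h => by
    rw [blockIdx_comp_subIdx ht] at h
    exact eq_one_or_even_of_odd_subBlock (blockIdx_spec ht m).1 h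

end Streams

-- `⋃ l, I_{4l+6}(T)`, where both comparisons are strict.
def sixModFourBlocks (t : ℕ → ℕ) : Set ℕ :=
  ⋃ l : ℕ, Set.Ico (t (4 * l + 5)).factorial (t (4 * l + 6)).factorial

lemma upperDensity_sixModFourBlocks {t : ℕ → ℕ} (ht : StrictMono t) :
    upperDensity (sixModFourBlocks t) = 1 := by
  have hlin : StrictMono fun l : ℕ => 4 * l + 5 := fun _ _ h => by dsimp only; omega
  refine upperDensity_eq_one_of_Ico_subset (fun _ => Nat.factorial_pos _)
    (Set.subset_iUnion (fun l => Set.Ico (t (4 * l + 5)).factorial (t (4 * l + 6)).factorial))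
    ?_ ((tendsto_factorial_div_factorial_succ ht).comp hlin.tendsto_atTop)
  exact tendsto_atTop_mono (fun _ => Nat.self_le_factorial _)
    (ht.comp (hlin.add_const 1)).tendsto_atTop

lemma even_blockIdx_of_mem_sixModFourBlocks {t : ℕ → ℕ} (ht : StrictMono t) {m : ℕ}
    (hm : m ∈ sixModFourBlocks t) :
    Even (blockIdx t m) ∧ Even (blockIdx (t ∘ subIdx) m) := by
  obtain ⟨l, hl₁, hl₂⟩ := Set.mem_iUnion.1 hm
  have hblock : blockIdx t m = 4 * l + 6 := blockIdx_eq_succ ht (by omega) hl₁ hl₂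
  rw [blockIdx_comp_subIdx ht, hblock]
  exact ⟨⟨2 * l + 3, by ring⟩, even_subBlock_four_mul_add_six l⟩

lemma strictPref_trans {α : Type*} {P : α → Prop} {R : α → α → Prop}
    (htrans : ∀ x y z, P x → P y → P z → R x y → R y z → R x z) {x y z : α}
    (hx : P x) (hy : P y) (hz : P z) (hxy : R x y ∧ ¬ R y x) (hyz : R y z ∧ ¬ R z y) :
    R x z ∧ ¬ R z x :=
  ⟨htrans x y z hx hy hz hxy.1 hyz.1, fun hzx => hxy.2 (htrans y z x hy hz hx hyz.1 hzx)⟩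

theorem stmt_17_general (a b : ℝ) (hab : a < b)
    (R : (ℕ → ℝ) → (ℕ → ℝ) → Prop)
    (htrans : ∀ x y z : ℕ → ℝ, (∀ i, x i = a ∨ x i = b) → (∀ i, y i = a ∨ y i = b) →
      (∀ i, z i = a ∨ z i = b) → R x y → R y z → R x z)
    (hWUAP : ∀ x y : ℕ → ℝ, (∀ i, x i = a ∨ x i = b) → (∀ i, y i = a ∨ y i = b) →
      (∀ i, y i ≤ x i) →
      ∀ S : Set ℕ, upperDensity S = 1 → (∀ i ∈ S, y i < x i) → (R x y ∧ ¬ R y x))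
    (t : ℕ → ℕ) (ht : StrictMono t) :
    -- y(S) ≺ x(T)
    (R (xStream a b t) (yStream a b (t ∘ subIdx)) ∧
      ¬ R (yStream a b (t ∘ subIdx)) (xStream a b t)) ∧
    -- y(T) ≺ x(S)
    (R (xStream a b (t ∘ subIdx)) (yStream a b t) ∧
      ¬ R (yStream a b t) (xStream a b (t ∘ subIdx))) ∧
    -- hence x(T) ≺ y(T) → y(S) ≺ x(S)
    ((R (yStream a b t) (xStream a b t) ∧ ¬ R (xStream a b t) (yStream a b t)) →
      (R (xStream a b (t ∘ subIdx)) (yStream a b (t ∘ subIdx)) ∧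
        ¬ R (yStream a b (t ∘ subIdx)) (xStream a b (t ∘ subIdx)))) := by
  have hD := upperDensity_sixModFourBlocks ht
  have hyS_xT := hWUAP _ _ (xStream_eq_or_eq t) (yStream_eq_or_eq (t ∘ subIdx))
    (yStream_subIdx_le_xStream hab.le ht) _ hD fun _ hm =>
      yStream_lt_xStream hab (even_blockIdx_of_mem_sixModFourBlocks ht hm).2
        (even_blockIdx_of_mem_sixModFourBlocks ht hm).1
  have hyT_xS := hWUAP _ _ (xStream_eq_or_eq (t ∘ subIdx)) (yStream_eq_or_eq t)
    (yStream_le_xStream_subIdx hab.le ht) _ hD fun _ hm =>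
      yStream_lt_xStream hab (even_blockIdx_of_mem_sixModFourBlocks ht hm).1
        (even_blockIdx_of_mem_sixModFourBlocks ht hm).2
  refine ⟨hyS_xT, hyT_xS, fun hxT_yT => ?_⟩
  exact strictPref_trans htrans (xStream_eq_or_eq _) (xStream_eq_or_eq t) (yStream_eq_or_eq _)
    (strictPref_trans htrans (xStream_eq_or_eq _) (yStream_eq_or_eq t) (xStream_eq_or_eq t)
      hyT_xS hxT_yT) hyS_xT

/-- for a complete transitive relation on {a,b}^ℕ satisfying
Weak Upper Asymptotic Pareto, with T enumerated by `t` and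
S = T \ {t_1, t_{4k+1}, t_{4k+2} : k ∈ ℕ} enumerated by `t ∘ subIdx`, one has
y(S) ≺ x(T) and y(T) ≺ x(S); hence x(T) ≺ y(T) implies y(S) ≺ x(S). -/
theorem stmt_17 (a b : ℝ) (hab : a < b)
    (R : (ℕ → ℝ) → (ℕ → ℝ) → Prop)
    (htotal : ∀ x y : ℕ → ℝ, (∀ i, x i = a ∨ x i = b) → (∀ i, y i = a ∨ y i = b) →
      (R x y ∨ R y x))
    (htrans : ∀ x y z : ℕ → ℝ, (∀ i, x i = a ∨ x i = b) → (∀ i, y i = a ∨ y i = b) →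
      (∀ i, z i = a ∨ z i = b) → R x y → R y z → R x z)
    (hWUAP : ∀ x y : ℕ → ℝ, (∀ i, x i = a ∨ x i = b) → (∀ i, y i = a ∨ y i = b) →
      (∀ i, y i ≤ x i) →
      ∀ S : Set ℕ, upperDensity S = 1 → (∀ i ∈ S, y i < x i) → (R x y ∧ ¬ R y x))
    (t : ℕ → ℕ) (ht : StrictMono t) :
    -- y(S) ≺ x(T)
    (R (xStream a b t) (yStream a b (t ∘ subIdx)) ∧
      ¬ R (yStream a b (t ∘ subIdx)) (xStream a b t)) ∧
    -- y(T) ≺ x(S)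
    (R (xStream a b (t ∘ subIdx)) (yStream a b t) ∧
      ¬ R (yStream a b t) (xStream a b (t ∘ subIdx))) ∧
    -- hence x(T) ≺ y(T) → y(S) ≺ x(S)
    ((R (yStream a b t) (xStream a b t) ∧ ¬ R (xStream a b t) (yStream a b t)) →
      (R (xStream a b (t ∘ subIdx)) (yStream a b (t ∘ subIdx)) ∧
        ¬ R (yStream a b (t ∘ subIdx)) (xStream a b (t ∘ subIdx)))) :=
  stmt_17_general a b hab R htrans hWUAP t ht
end

section
/- Assume the axiom of choice. There exists a complete transitive binary relation on {0,1}^ℕ that satisfies Anonymity and Strong Pareto (hence also Upper Asymptotic Pareto): every partial order extends to a total order by Szpilrajn's extension theorem applied to the preorder generated by Pareto dominance and finite permutations. -/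
open Filter Topology

/-!
Say `x ≼ y` when `x` is Pareto-dominated by some rearrangement `y ∘ σ` of `y`, with `σ` a
permutation moving only finitely many coordinates. This is a preorder, and its strict part
contains strict Pareto dominance: if `y ≤ x` and `x ≼ y`, then `y ≤ x ≤ y ∘ σ`, and since every
point lies on a finite cycle of `σ`, following that cycle forces `y ∘ σ = y`, hence `x = y`.
Szpilrajn's theorem, applied to the antisymmetrization of `≼`, extends it to a total preorder
with the same strict comparisons.
-/

open Function MulAction Equiv

theorem exists_total_extension_of_isPreorder {α : Type*} (r : α → α → Prop) [IsPreorder α r] :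
    ∃ s : α → α → Prop, (∀ a b, s a b ∨ s b a) ∧ (∀ a b c, s a b → s b c → s a c) ∧ r ≤ s ∧
      ∀ a b, r a b → ¬ r b a → ¬ s b a := by
  let _ : Preorder α := { le := r, le_refl := refl_of r, le_trans := fun _ _ _ => trans_of r }
  let f : α → LinearExtension (Antisymmetrization α (· ≤ ·)) :=
    toLinearExtension ∘ toAntisymmetrization (· ≤ ·)
  have hf : Monotone f := fun _ _ h =>
    toLinearExtension.monotone (toAntisymmetrization_le_toAntisymmetrization_iff.2 h)
  have hf' : StrictMono f := fun _ _ h =>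
    (toLinearExtension.monotone.strictMono_of_injective injective_id)
      (toAntisymmetrization_lt_toAntisymmetrization_iff.2 h)
  exact ⟨fun a b => f a ≤ f b, fun _ _ => le_total _ _, fun _ _ _ => le_trans,
    fun _ _ h => hf h, fun _ _ hab hba => not_le.2 (hf' ⟨hab, hba⟩)⟩

theorem Function.Injective.exists_iterate_apply_eq {ι : Type*} {f : ι → ι} (hf : Injective f)
    (hfin : {i | f i ≠ i}.Finite) (i : ι) : ∃ k > 0, f^[k] i = i := by
  by_cases hi : f i = i
  · exact ⟨1, one_pos, hi⟩
  have hmaps : Set.MapsTo f {i | f i ≠ i} {i | f i ≠ i} := fun _ hj => hf.ne hj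
  obtain ⟨m, n, hmn, heq⟩ := hfin.exists_lt_map_eq_of_forall_mem (f := fun n => f^[n] i)
    fun n => hmaps.iterate n hi
  obtain ⟨k, rfl⟩ := Nat.exists_eq_add_of_lt hmn
  refine ⟨k + 1, k.succ_pos, (hf.iterate m) ?_⟩
  rw [← iterate_add_apply]
  exact heq.symm

theorem comp_eq_self_of_le_comp {ι α : Type*} [PartialOrder α] {x : ι → α} {f : ι → ι}
    (hf : Injective f) (hfin : {i | f i ≠ i}.Finite) (hle : x ≤ x ∘ f) : x ∘ f = x := by
  funext i
  obtain ⟨k, hk, hperiod⟩ := hf.exists_iterate_apply_eq hfin i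
  have hmono : Monotone fun n => x (f^[n] i) := monotone_nat_of_le_succ fun n => by
    rw [iterate_succ_apply']
    exact hle _
  refine le_antisymm (show x (f i) ≤ x i from ?_) (hle i)
  simpa only [iterate_one, hperiod] using hmono (Nat.one_le_iff_ne_zero.2 hk.ne')

section AnonymousPareto

variable {ι α : Type*}

def finitaryPerm (ι : Type*) : Subgroup (Perm ι) where
  carrier := {σ | (fixedBy ι σ)ᶜ.Finite}
  one_mem' := by simp
  mul_mem' hσ hτ := (hσ.union hτ).subset <| by
    simp_rw [← Set.compl_inter, Set.compl_subset_compl, fixedBy_mul]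
  inv_mem' := by simp [fixedBy_inv]

theorem swap_mem_finitaryPerm [DecidableEq ι] (i j : ι) : swap i j ∈ finitaryPerm ι :=
  finite_compl_fixedBy_swap

section Preorder

variable [Preorder α]

def AnonymousParetoLE (x y : ι → α) : Prop :=
  ∃ σ ∈ finitaryPerm ι, x ≤ y ∘ σ

instance AnonymousParetoLE.isPreorder : IsPreorder (ι → α) AnonymousParetoLE where
  refl x := ⟨1, Subgroup.one_mem _, le_rfl⟩
  trans _ _ z := by
    rintro ⟨σ, hσ, hxy⟩ ⟨τ, hτ, hyz⟩
    exact ⟨τ * σ, Subgroup.mul_mem _ hτ hσ, hxy.trans fun i => hyz (σ i)⟩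

theorem AnonymousParetoLE.of_le {x y : ι → α} (h : x ≤ y) : AnonymousParetoLE x y :=
  ⟨1, Subgroup.one_mem _, h⟩

theorem AnonymousParetoLE.comp_self {σ : Perm ι} (hσ : σ ∈ finitaryPerm ι) (x : ι → α) :
    AnonymousParetoLE (x ∘ σ) x :=
  ⟨σ, hσ, le_rfl⟩

theorem AnonymousParetoLE.self_comp {σ : Perm ι} (hσ : σ ∈ finitaryPerm ι) (x : ι → α) :
    AnonymousParetoLE x (x ∘ σ) :=
  ⟨σ⁻¹, Subgroup.inv_mem _ hσ, fun i => by simp⟩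

end Preorder

theorem eq_of_le_of_anonymousParetoLE [PartialOrder α] {x y : ι → α} (hyx : y ≤ x)
    (hxy : AnonymousParetoLE x y) : x = y := by
  obtain ⟨σ, hσ, hle⟩ := hxy
  have hfix : y ∘ σ = y := comp_eq_self_of_le_comp σ.injective hσ (hyx.trans hle)
  exact le_antisymm (hfix ▸ hle) hyx

end AnonymousPareto

theorem nonempty_of_upperDensity_pos {S : Set ℕ} (hS : 0 < upperDensity S) : S.Nonempty := by
  by_contra h
  simp [Set.not_nonempty_iff_eq_empty.1 h, upperDensity] at hS

/-- (using the axiom of choice, via Szpilrajn's extension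
theorem) there exists a complete transitive relation on {0,1}^ℕ satisfying
Anonymity and Strong Pareto, hence also Upper Asymptotic Pareto. -/
theorem stmt_18 :
    ∃ R : (ℕ → Fin 2) → (ℕ → Fin 2) → Prop,
      -- completeness
      (∀ x y, R x y ∨ R y x) ∧
      -- transitivity
      (∀ x y z, R x y → R y z → R x z) ∧
      -- Anonymity
      (∀ (x : ℕ → Fin 2) (i j : ℕ),
        R x (x ∘ Equiv.swap i j) ∧ R (x ∘ Equiv.swap i j) x) ∧
      -- Strong Pareto
      (∀ x y : ℕ → Fin 2, (∀ i, y i ≤ x i) → x ≠ y → (R x y ∧ ¬ R y x)) ∧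
      -- hence Upper Asymptotic Pareto
      (∀ x y : ℕ → Fin 2, (∀ i, y i ≤ x i) →
        ∀ S : Set ℕ, 0 < upperDensity S → (∀ i ∈ S, y i < x i) →
        (R x y ∧ ¬ R y x)) := by
  obtain ⟨s, htotal, htrans, hext, hstrict⟩ :=
    exists_total_extension_of_isPreorder (AnonymousParetoLE (ι := ℕ) (α := Fin 2))
  have strongPareto : ∀ x y : ℕ → Fin 2, y ≤ x → x ≠ y → s y x ∧ ¬ s x y := fun x y hyx hne =>
    ⟨hext _ _ (.of_le hyx),
      hstrict _ _ (.of_le hyx) fun h => hne (eq_of_le_of_anonymousParetoLE hyx h)⟩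
  refine ⟨fun x y => s y x, fun x y => htotal y x, fun x y z hxy hyz => htrans z y x hyz hxy,
    fun x i j => ⟨hext _ _ (.comp_self (swap_mem_finitaryPerm i j) x),
      hext _ _ (.self_comp (swap_mem_finitaryPerm i j) x)⟩, strongPareto, ?_⟩
  intro x y hyx S hS hlt
  obtain ⟨i, hi⟩ := nonempty_of_upperDensity_pos hS
  exact strongPareto x y hyx fun h => (hlt i hi).ne' (congrFun h i)
end
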